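/- Let T be a linear exponential monad on a symmetric monoidal category (C,⊗,I) with finite coproducts. For all objects A₁,…,Aₙ of C, hypernormalisation has a left inverse: μ_{Σᵢ Aᵢ} ∘ T⟨Tι₁,…,Tιₙ⟩ ∘ 𝒩 = id : T(Σᵢ Aᵢ) → T(Σᵢ Aᵢ), where ⟨Tι₁,…,Tιₙ⟩ : Σᵢ TAᵢ → T(Σᵢ Aᵢ) is the copairing of the maps Tιᵢ : TAᵢ → T(Σᵢ Aᵢ). -/

import Mathlib

open CategoryTheory MonoidalCategory Limits

universe v u

variable {C : Type u} [Category.{v} C]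

/-- A linear exponential monad on a symmetric monoidal category `(C,⊗,I)`: a monad `T`
together with a lifting of the symmetric monoidal structure of `C` to the Eilenberg–Moore
category `C^T` (making the forgetful functor strict symmetric monoidal) such that the
lifted structure is given by finite coproducts: the lifted unit is an initial `T`-algebra
and the lifted tensor of two algebras, with the specified (natural) coprojections, is
their coproduct in `C^T`. All data is recorded on underlying objects and morphisms of
`C`, which is possible precisely because the forgetful functor is strict symmetric
monoidal. -/
structure LinearExponential [MonoidalCategory C] [SymmetricCategory C] (T : Monad C) where
  /-- the lifted algebra structure on the tensor of two algebras -/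
  tstr : ∀ X Y : T.Algebra, T.obj (X.A ⊗ Y.A) ⟶ X.A ⊗ Y.A
  tstr_unit : ∀ X Y, T.η.app (X.A ⊗ Y.A) ≫ tstr X Y = 𝟙 (X.A ⊗ Y.A)
  tstr_mul : ∀ X Y, T.μ.app (X.A ⊗ Y.A) ≫ tstr X Y = T.map (tstr X Y) ≫ tstr X Y
  /-- the lifted algebra structure on the unit object -/
  ustr : T.obj (𝟙_ C) ⟶ 𝟙_ C
  ustr_unit : T.η.app (𝟙_ C) ≫ ustr = 𝟙 (𝟙_ C)
  ustr_mul : T.μ.app (𝟙_ C) ≫ ustr = T.map ustr ≫ ustr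
  /-- the tensor of two algebra morphisms is an algebra morphism -/
  tensorHom_alg : ∀ {X X' Y Y' : T.Algebra} (f : X ⟶ X') (g : Y ⟶ Y'),
    T.map (f.f ⊗ₘ g.f) ≫ tstr X' Y' = tstr X Y ≫ (f.f ⊗ₘ g.f)
  /-- the coherence constraints of `C` are algebra morphisms, so the monoidal structure
  (with all its constraints) lifts strictly -/
  assoc_alg : ∀ X Y Z : T.Algebra,
    T.map (α_ X.A Y.A Z.A).hom ≫ tstr X ⟨Y.A ⊗ Z.A, tstr Y Z, tstr_unit Y Z, tstr_mul Y Z⟩ =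
      tstr ⟨X.A ⊗ Y.A, tstr X Y, tstr_unit X Y, tstr_mul X Y⟩ Z ≫ (α_ X.A Y.A Z.A).hom
  lunit_alg : ∀ X : T.Algebra,
    T.map (λ_ X.A).hom ≫ X.a = tstr ⟨𝟙_ C, ustr, ustr_unit, ustr_mul⟩ X ≫ (λ_ X.A).hom
  runit_alg : ∀ X : T.Algebra,
    T.map (ρ_ X.A).hom ≫ X.a = tstr X ⟨𝟙_ C, ustr, ustr_unit, ustr_mul⟩ ≫ (ρ_ X.A).hom
  braid_alg : ∀ X Y : T.Algebra,
    T.map (β_ X.A Y.A).hom ≫ tstr Y X = tstr X Y ≫ (β_ X.A Y.A).hom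
  /-- the specified coprojections into the lifted tensor -/
  jl : ∀ X Y : T.Algebra, X.A ⟶ X.A ⊗ Y.A
  jr : ∀ X Y : T.Algebra, Y.A ⟶ X.A ⊗ Y.A
  jl_alg : ∀ X Y, T.map (jl X Y) ≫ tstr X Y = X.a ≫ jl X Y
  jr_alg : ∀ X Y, T.map (jr X Y) ≫ tstr X Y = Y.a ≫ jr X Y
  jl_natural : ∀ {X X' Y Y' : T.Algebra} (f : X ⟶ X') (g : Y ⟶ Y'),
    jl X Y ≫ (f.f ⊗ₘ g.f) = f.f ≫ jl X' Y'
  jr_natural : ∀ {X X' Y Y' : T.Algebra} (f : X ⟶ X') (g : Y ⟶ Y'),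
    jr X Y ≫ (f.f ⊗ₘ g.f) = g.f ≫ jr X' Y'
  /-- the lifted unit is an initial algebra -/
  unit_initial : ∀ B : T.Algebra, ∃! p : 𝟙_ C ⟶ B.A, T.map p ≫ B.a = ustr ≫ p
  /-- the lifted tensor with the coprojections is a binary coproduct in `C^T` -/
  tensor_coprod : ∀ (X Y Z : T.Algebra) (u : X.A ⟶ Z.A) (w : Y.A ⟶ Z.A),
    T.map u ≫ Z.a = X.a ≫ u → T.map w ≫ Z.a = Y.a ≫ w →
    ∃! h : X.A ⊗ Y.A ⟶ Z.A,
      (T.map h ≫ Z.a = tstr X Y ≫ h) ∧ jl X Y ≫ h = u ∧ jr X Y ≫ h = w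

namespace LinearExponential

variable [MonoidalCategory C] [SymmetricCategory C] {T : Monad C}

/-- The lifted unit algebra. -/
def uAlg (L : LinearExponential T) : T.Algebra :=
  ⟨𝟙_ C, L.ustr, L.ustr_unit, L.ustr_mul⟩

/-- The lifted tensor of two algebras. -/
def tAlg (L : LinearExponential T) (X Y : T.Algebra) : T.Algebra :=
  ⟨X.A ⊗ Y.A, L.tstr X Y, L.tstr_unit X Y, L.tstr_mul X Y⟩

/-- The `n`-fold lifted tensor `X₁ ⊗ (X₂ ⊗ (⋯ ⊗ I))` of a family of algebras. -/
def nAlg (L : LinearExponential T) : ∀ {n : ℕ}, (Fin n → T.Algebra) → T.Algebra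
  | 0, _ => L.uAlg
  | _ + 1, X => L.tAlg (X 0) (L.nAlg fun i => X i.succ)

/-- The `i`-th coprojection into the `n`-fold lifted tensor. -/
def nJ (L : LinearExponential T) :
    ∀ {n : ℕ} (X : Fin n → T.Algebra) (i : Fin n), (X i).A ⟶ (L.nAlg X).A
  | 0, _, i => i.elim0
  | n + 1, X, i =>
      Fin.cases (motive := fun i => (X i).A ⟶ (L.nAlg X).A)
        (L.jl (X 0) (L.nAlg fun k => X k.succ))
        (fun k => L.nJ (fun k => X k.succ) k ≫ L.jr (X 0) (L.nAlg fun k => X k.succ)) i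

/-- The tensor `η_{TA₁} ⊗ ⋯ ⊗ η_{TAₙ}` of unit components, as a morphism of `C` between
the carriers of the `n`-fold lifted tensors of free algebras. -/
def netaMap (L : LinearExponential T) :
    ∀ {n : ℕ} (A : Fin n → C),
      (L.nAlg fun i => T.free.obj (A i)).A ⟶ (L.nAlg fun i => T.free.obj (T.obj (A i))).A
  | 0, _ => 𝟙 _
  | _ + 1, A =>
      (T.η.app (T.obj (A 0)) ⊗ₘ L.netaMap fun i => A i.succ :
        T.obj (A 0) ⊗ (L.nAlg fun i => T.free.obj (A i.succ)).A ⟶ _)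

end LinearExponential

open LinearExponential

/-- The data of the canonical `T`-algebra isomorphism
`φ : F^T(A₁+⋯+Aₙ) ≅ F^T A₁ ⊗ ⋯ ⊗ F^T Aₙ` (which exists and is unique because the free
functor preserves finite coproducts, and the `n`-fold lifted tensor of free algebras is
their coproduct in `C^T`): an invertible map commuting with the algebra structures whose
composites with the maps `Tιᵢ` are the coprojections. -/
structure PhiData [MonoidalCategory C] [SymmetricCategory C] [HasFiniteCoproducts C]
    {T : Monad C} (L : LinearExponential T) {n : ℕ} (A : Fin n → C) where
  φ : T.obj (∐ A) ⟶ (L.nAlg fun i => T.free.obj (A i)).A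
  inv : (L.nAlg fun i => T.free.obj (A i)).A ⟶ T.obj (∐ A)
  hom_inv : φ ≫ inv = 𝟙 _
  inv_hom : inv ≫ φ = 𝟙 _
  alg : T.map φ ≫ (L.nAlg fun i => T.free.obj (A i)).a = T.μ.app (∐ A) ≫ φ
  comm : ∀ i : Fin n, T.map (Sigma.ι A i) ≫ φ = L.nJ (fun i => T.free.obj (A i)) i

/-- The `n`-ary hypernormalisation map
`𝒩 = φ⁻¹ ∘ (η_{TA₁} ⊗ ⋯ ⊗ η_{TAₙ}) ∘ φ : T(Σᵢ Aᵢ) ⟶ T(Σᵢ TAᵢ)`. -/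
noncomputable def hyperN [MonoidalCategory C] [SymmetricCategory C] [HasFiniteCoproducts C]
    {T : Monad C} (L : LinearExponential T) {n : ℕ} (A : Fin n → C)
    (p : PhiData L A) (q : PhiData L fun i => T.obj (A i)) :
    T.obj (∐ A) ⟶ T.obj (∐ fun i => T.obj (A i)) :=
  p.φ ≫ L.netaMap A ≫ q.inv

section Aux

namespace LinearExponential

variable [MonoidalCategory C] [SymmetricCategory C] {T : Monad C}

lemma nJ_zero (L : LinearExponential T) {n : ℕ} (X : Fin (n + 1) → T.Algebra) :
    L.nJ X 0 = L.jl (X 0) (L.nAlg fun k => X k.succ) := by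
  simp [nJ]
  rfl

lemma nJ_succ (L : LinearExponential T) {n : ℕ} (X : Fin (n + 1) → T.Algebra) (k : Fin n) :
    L.nJ X k.succ = L.nJ (fun k => X k.succ) k ≫ L.jr (X 0) (L.nAlg fun k => X k.succ) := by
  simp [nJ]
  rfl

lemma nAlg_a_succ (L : LinearExponential T) {n : ℕ} (X : Fin (n + 1) → T.Algebra) :
    (L.nAlg X).a = L.tstr (X 0) (L.nAlg fun k => X k.succ) := rfl

/-- The `n`-fold tensor of a family of maps between carriers of algebras. -/
def ntensor (L : LinearExponential T) :
    ∀ {n : ℕ} {X Y : Fin n → T.Algebra}, (∀ i, (X i).A ⟶ (Y i).A) →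
      ((L.nAlg X).A ⟶ (L.nAlg Y).A)
  | 0, _, _, _ => 𝟙 _
  | _ + 1, _, _, f => f 0 ⊗ₘ L.ntensor fun i => f i.succ

lemma ntensor_succ (L : LinearExponential T) {n : ℕ} {X Y : Fin (n + 1) → T.Algebra}
    (f : ∀ i, (X i).A ⟶ (Y i).A) :
    L.ntensor f = (f 0 ⊗ₘ L.ntensor fun i => f i.succ) := rfl

lemma ntensor_comp (L : LinearExponential T) :
    ∀ {n : ℕ} {X Y Z : Fin n → T.Algebra} (f : ∀ i, (X i).A ⟶ (Y i).A)
      (g : ∀ i, (Y i).A ⟶ (Z i).A),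
      L.ntensor (fun i => f i ≫ g i) = L.ntensor f ≫ L.ntensor g := by
  intro n
  induction n with
  | zero => intro X Y Z f g; exact (Category.comp_id _).symm
  | succ n ih =>
      intro X Y Z f g
      erw [ntensor_succ, ntensor_succ, ntensor_succ, tensorHom_comp_tensorHom, ← ih]

lemma ntensor_alg (L : LinearExponential T) :
    ∀ {n : ℕ} {X Y : Fin n → T.Algebra} (f : ∀ i, (X i).A ⟶ (Y i).A),
      (∀ i, T.map (f i) ≫ (Y i).a = (X i).a ≫ f i) →
      T.map (L.ntensor f) ≫ (L.nAlg Y).a = (L.nAlg X).a ≫ L.ntensor f := by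
  intro n
  induction n with
  | zero =>
      intro X Y f hf
      show T.map (𝟙 (𝟙_ C)) ≫ L.ustr = L.ustr ≫ 𝟙 (𝟙_ C)
      rw [T.map_id, Category.id_comp, Category.comp_id]
  | succ n ih =>
      intro X Y f hf
      exact L.tensorHom_alg (X := X 0) (X' := Y 0)
        (Y := L.nAlg fun i => X i.succ) (Y' := L.nAlg fun i => Y i.succ)
        ⟨f 0, hf 0⟩ ⟨L.ntensor fun i => f i.succ, ih _ fun i => hf i.succ⟩

lemma nJ_natural (L : LinearExponential T) :
    ∀ {n : ℕ} {X Y : Fin n → T.Algebra} (f : ∀ i, (X i).A ⟶ (Y i).A),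
      (∀ i, T.map (f i) ≫ (Y i).a = (X i).a ≫ f i) → ∀ i,
      L.nJ X i ≫ L.ntensor f = f i ≫ L.nJ Y i := by
  intro n
  induction n with
  | zero => intro X Y f hf i; exact i.elim0
  | succ n ih =>
      intro X Y f hf i
      refine Fin.cases ?_ ?_ i
      · rw [nJ_zero, nJ_zero, ntensor_succ]
        exact L.jl_natural (X := X 0) (X' := Y 0) ⟨f 0, hf 0⟩
          ⟨L.ntensor fun k => f k.succ, L.ntensor_alg _ fun k => hf k.succ⟩
      · intro k
        have hjr := L.jr_natural (X := X 0) (X' := Y 0)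
          (f := (⟨f 0, hf 0⟩ : X 0 ⟶ Y 0))
          (g := (⟨L.ntensor fun k => f k.succ, L.ntensor_alg _ fun k => hf k.succ⟩ :
            L.nAlg (fun k => X k.succ) ⟶ L.nAlg fun k => Y k.succ))
        erw [nJ_succ, nJ_succ, ntensor_succ, Category.assoc, hjr, ← Category.assoc,
          ih _ (fun k => hf k.succ) k, Category.assoc]
        rfl

/-- The `n`-ary universal property of the lifted tensor as a coproduct in `C^T`. -/
theorem ncoprod (L : LinearExponential T) :
    ∀ {n : ℕ} (X : Fin n → T.Algebra) (Z : T.Algebra) (u : ∀ i, (X i).A ⟶ Z.A),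
      (∀ i, T.map (u i) ≫ Z.a = (X i).a ≫ u i) →
      ∃! h : (L.nAlg X).A ⟶ Z.A,
        (T.map h ≫ Z.a = (L.nAlg X).a ≫ h) ∧ ∀ i, L.nJ X i ≫ h = u i := by
  intro n
  induction n with
  | zero =>
      intro X Z u hu
      obtain ⟨p0, hp0, hp0u⟩ := L.unit_initial Z
      exact ⟨p0, ⟨hp0, fun i => i.elim0⟩, fun y hy => hp0u y hy.1⟩
  | succ n ih =>
      intro X Z u hu
      obtain ⟨w, ⟨hwalg, hwj⟩, hwu⟩ :=
        ih (fun k => X k.succ) Z (fun k => u k.succ) fun k => hu k.succ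
      obtain ⟨h, ⟨hhalg, hhl, hhr⟩, hhu⟩ :=
        L.tensor_coprod (X 0) (L.nAlg fun k => X k.succ) Z (u 0) w (hu 0) hwalg
      refine ⟨h, ⟨hhalg, ?_⟩, ?_⟩
      · intro i
        refine Fin.cases ?_ ?_ i
        · rw [nJ_zero]; exact hhl
        · intro k; erw [nJ_succ, Category.assoc, hhr]; exact hwj k
      · rintro y ⟨hyalg, hyj⟩
        refine hhu y ⟨hyalg, ?_, ?_⟩
        · rw [← nJ_zero]; exact hyj 0
        · refine hwu (L.jr (X 0) (L.nAlg fun k => X k.succ) ≫ y) ⟨?_, ?_⟩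
          · erw [T.map_comp, Category.assoc, hyalg, nAlg_a_succ, ← Category.assoc,
              L.jr_alg, Category.assoc]
            rfl
          · intro k; erw [← Category.assoc, ← nJ_succ]; exact hyj k.succ

lemma netaMap_eq (L : LinearExponential T) :
    ∀ {n : ℕ} (A : Fin n → C),
      L.netaMap A = L.ntensor (X := fun i => T.free.obj (A i))
        (Y := fun i => T.free.obj (T.obj (A i))) fun i => T.η.app (T.obj (A i)) := by
  intro n
  induction n with
  | zero => intro A; rfl
  | succ n ih =>
      intro A
      show (T.η.app (T.obj (A 0)) ⊗ₘ L.netaMap fun i => A i.succ) = _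
      erw [ntensor_succ, ih]
      rfl

end LinearExponential

section PhiDataLemmas

variable [MonoidalCategory C] [SymmetricCategory C] [HasFiniteCoproducts C]
  {T : Monad C} {L : LinearExponential T} {n : ℕ} {A : Fin n → C}

theorem PhiData.inv_alg (p : PhiData L A) :
    T.map p.inv ≫ T.μ.app (∐ A) = (L.nAlg fun i => T.free.obj (A i)).a ≫ p.inv := by
  have h1 : T.map p.inv ≫ T.μ.app (∐ A) ≫ p.φ = (L.nAlg fun i => T.free.obj (A i)).a := by
    rw [← p.alg, ← Category.assoc, ← T.map_comp, p.inv_hom, T.map_id, Category.id_comp]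
  calc T.map p.inv ≫ T.μ.app (∐ A)
      = (T.map p.inv ≫ T.μ.app (∐ A) ≫ p.φ) ≫ p.inv := by
        rw [Category.assoc, Category.assoc, p.hom_inv, Category.comp_id]
    _ = _ := by rw [h1]

theorem PhiData.comm_inv (p : PhiData L A) (i : Fin n) :
    L.nJ (fun i => T.free.obj (A i)) i ≫ p.inv = T.map (Sigma.ι A i) := by
  erw [← p.comm, Category.assoc, p.hom_inv, Category.comp_id]

end PhiDataLemmas

end Aux

/-- Hypernormalisation has a left inverse:
`μ_{Σᵢ Aᵢ} ∘ T⟨Tι₁,…,Tιₙ⟩ ∘ 𝒩 = id : T(Σᵢ Aᵢ) → T(Σᵢ Aᵢ)`. -/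
theorem hypernormalisation_left_inverse
    [MonoidalCategory C] [SymmetricCategory C] [HasFiniteCoproducts C]
    (T : Monad C) (L : LinearExponential T) {n : ℕ} (A : Fin n → C)
    (p : PhiData L A) (q : PhiData L fun i => T.obj (A i)) :
    hyperN L A p q ≫ T.map (Sigma.desc fun i => T.map (Sigma.ι A i)) ≫ T.μ.app (∐ A) =
      𝟙 (T.obj (∐ A)) := by
  have hnat : ∀ {X Y : C} (f : X ⟶ Y),
      T.map (T.map f) ≫ T.μ.app Y = T.μ.app X ≫ T.map f := fun f => T.μ.naturality f
  -- the componentwise maps `u i = μ ≫ Tι i`, algebra maps `F(TAᵢ) ⟶ F(ΣA)`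
  have hu : ∀ i, T.map (T.μ.app (A i) ≫ T.map (Sigma.ι A i)) ≫ T.μ.app (∐ A) =
      T.μ.app (T.obj (A i)) ≫ (T.μ.app (A i) ≫ T.map (Sigma.ι A i)) := by
    intro i
    rw [T.map_comp, Category.assoc, hnat (Sigma.ι A i), ← Category.assoc, T.assoc (A i),
      Category.assoc]
  -- the codiagonal `D` on the n-fold tensor of copies of `F(ΣA)`
  obtain ⟨D, ⟨hDalg, hDj⟩, -⟩ :=
    L.ncoprod (fun _ : Fin n => T.free.obj (∐ A)) (T.free.obj (∐ A)) (fun _ => 𝟙 _)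
      (fun _ => by rw [T.map_id, Category.id_comp, Category.comp_id])
  -- `G := q.inv ≫ T d ≫ μ` is the copairing of the `u i`
  obtain ⟨g₀, -, hg₀⟩ :=
    L.ncoprod (fun i => T.free.obj (T.obj (A i))) (T.free.obj (∐ A))
      (fun i => T.μ.app (A i) ≫ T.map (Sigma.ι A i)) hu
  have hGalg : T.map (q.inv ≫ T.map (Sigma.desc fun i => T.map (Sigma.ι A i)) ≫
        T.μ.app (∐ A)) ≫ T.μ.app (∐ A) =
      (L.nAlg fun i => T.free.obj (T.obj (A i))).a ≫
        (q.inv ≫ T.map (Sigma.desc fun i => T.map (Sigma.ι A i)) ≫ T.μ.app (∐ A)) := by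
    rw [T.map_comp, T.map_comp, Category.assoc, Category.assoc, T.assoc (∐ A),
      ← Category.assoc (T.map (T.map (Sigma.desc fun i => T.map (Sigma.ι A i)))),
      hnat (Sigma.desc fun i => T.map (Sigma.ι A i)), ← Category.assoc, ← Category.assoc,
      PhiData.inv_alg q, Category.assoc, Category.assoc]
  have hGj : ∀ i, L.nJ (fun i => T.free.obj (T.obj (A i))) i ≫
      (q.inv ≫ T.map (Sigma.desc fun i => T.map (Sigma.ι A i)) ≫ T.μ.app (∐ A)) =
      T.μ.app (A i) ≫ T.map (Sigma.ι A i) := by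
    intro i
    erw [← Category.assoc, PhiData.comm_inv q i, ← Category.assoc, ← T.map_comp,
      Sigma.ι_desc, hnat (Sigma.ι A i)]
  -- the copairing of algebra maps factors through the codiagonal
  have hntu : T.map (L.ntensor fun i => T.μ.app (A i) ≫ T.map (Sigma.ι A i)) ≫
        (L.nAlg fun _ : Fin n => T.free.obj (∐ A)).a =
      (L.nAlg fun i => T.free.obj (T.obj (A i))).a ≫
        L.ntensor fun i => T.μ.app (A i) ≫ T.map (Sigma.ι A i) :=
    L.ntensor_alg _ hu
  have hfac : q.inv ≫ T.map (Sigma.desc fun i => T.map (Sigma.ι A i)) ≫ T.μ.app (∐ A) =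
      (L.ntensor fun i => T.μ.app (A i) ≫ T.map (Sigma.ι A i)) ≫ D := by
    rw [hg₀ _ ⟨hGalg, hGj⟩]
    refine (hg₀ _ ⟨?_, ?_⟩).symm
    · rw [T.map_comp, Category.assoc, hDalg, ← Category.assoc, hntu, Category.assoc]
    · intro i
      rw [← Category.assoc, L.nJ_natural _ hu i, Category.assoc, hDj i, Category.comp_id]
  -- `netaMap ≫ ⊗u = ⊗(Tι)` by pure monoidal functoriality
  have h2 : L.netaMap A ≫ (L.ntensor fun i => T.μ.app (A i) ≫ T.map (Sigma.ι A i)) =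
      L.ntensor (X := fun i => T.free.obj (A i)) (Y := fun _ => T.free.obj (∐ A))
        fun i => T.map (Sigma.ι A i) := by
    erw [L.netaMap_eq, ← L.ntensor_comp]
    congr 1
    funext i
    erw [← Category.assoc, T.left_unit]
    exact Category.id_comp _
  -- `⊗(Tι) ≫ D = p.inv`
  have hv : ∀ i, T.map (T.map (Sigma.ι A i)) ≫ T.μ.app (∐ A) =
      T.μ.app (A i) ≫ T.map (Sigma.ι A i) := fun i => hnat (Sigma.ι A i)
  obtain ⟨g₁, -, hg₁⟩ :=
    L.ncoprod (fun i => T.free.obj (A i)) (T.free.obj (∐ A))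
      (fun i => T.map (Sigma.ι A i)) hv
  have h3 : (L.ntensor (X := fun i => T.free.obj (A i)) (Y := fun _ => T.free.obj (∐ A))
        fun i => T.map (Sigma.ι A i)) ≫ D = p.inv := by
    rw [hg₁ p.inv ⟨PhiData.inv_alg p, fun i => PhiData.comm_inv p i⟩]
    refine hg₁ _ ⟨?_, ?_⟩
    · erw [T.map_comp, Category.assoc, hDalg, ← Category.assoc, L.ntensor_alg _ hv,
        Category.assoc]
    · intro i
      erw [← Category.assoc, L.nJ_natural _ hv i, Category.assoc, hDj i, Category.comp_id]
  simp only [hyperN, Category.assoc]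
  erw [hfac, ← Category.assoc (L.netaMap A), h2, h3, p.hom_inv]
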